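/- Let G = (V,E) be a finite simple graph and r a positive integer. Define the cognitive radio network I with channel set C = {c_v : v ∈ V}: for each edge e = {u,v} ∈ E an SU U_e with SpecMap(U_e) = {c_u, c_v} and budget 2; an SU M with SpecMap(M) = C and budget r; and the potential graph a star centered at M with leaves {U_e : e ∈ E}. Then G has a vertex cover of size at most r if and only if I is connectable. -/

import Mathlib

/-!
The potential graph is a star centred at `M`, so a realization graph is connected exactly when
`M` shares an opened channel with every `U_e`. The channels opened by `M` then form a vertex cover
of size at most `r`, since `U_e` can only open endpoints of `e`; conversely, given a cover `S`,
let `M` open `S` and each `U_e` open one endpoint of `e` lying in `S`.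
-/

/-- A cognitive radio network: secondary users `U`, channels `C`,
spectrum maps, a potential graph, and antenna budgets. -/
structure CRN (U C : Type) where
  SpecMap : U → Finset C
  PG : SimpleGraph U
  budget : U → ℕ

/-- A valid spectrum assignment: each SU opens a subset of its spectrum map
of size at most its antenna budget. -/
def CRN.ValidSA {U C : Type} [DecidableEq C] (I : CRN U C) (SA : U → Finset C) : Prop :=
  ∀ u, SA u ⊆ I.SpecMap u ∧ (SA u).card ≤ I.budget u

/-- The realization graph under a spectrum assignment: potential edges whose
endpoints share an opened channel. -/
def CRN.RG {U C : Type} [DecidableEq C] (I : CRN U C) (SA : U → Finset C) : SimpleGraph U where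
  Adj u v := I.PG.Adj u v ∧ (SA u ∩ SA v).Nonempty
  symm := ⟨fun u v h => ⟨I.PG.adj_symm h.1, by rw [Finset.inter_comm]; exact h.2⟩⟩
  loopless := ⟨fun u h => I.PG.irrefl h.1⟩

/-- A network is connectable if some valid spectrum assignment makes the
realization graph connected. -/
def CRN.Connectable {U C : Type} [DecidableEq C] (I : CRN U C) : Prop :=
  ∃ SA, I.ValidSA SA ∧ (I.RG SA).Connected

/-- SUs of the vertex-cover reduction: the center M and one SU per edge of G. -/
abbrev V7 {V : Type} [Fintype V] [DecidableEq V] (G : SimpleGraph V) [DecidableRel G.Adj] :=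
  Unit ⊕ {e : Sym2 V // e ∈ G.edgeFinset}

/-- The network of the vertex-cover reduction: channels are the vertices of G;
the SU U_e for an edge e = {u,v} has spectrum map {u, v} and budget 2; the SU M
has spectrum map V and budget r; the potential graph is the star centered at M. -/
def net7 {V : Type} [Fintype V] [DecidableEq V] (G : SimpleGraph V) [DecidableRel G.Adj]
    (r : ℕ) : CRN (V7 G) V where
  SpecMap := fun u =>
    match u with
    | Sum.inl _ => Finset.univ
    | Sum.inr e => {x ∈ Finset.univ | x ∈ e.1}
  PG := SimpleGraph.fromRel (fun u _ => u = Sum.inl ())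
  budget := fun u =>
    match u with
    | Sum.inl _ => r
    | Sum.inr _ => 2

namespace SimpleGraph

variable {W : Type*} {H : SimpleGraph W} {c : W}

theorem connected_iff_forall_adj_of_star (hstar : ∀ u v, H.Adj u v → u = c ∨ v = c) :
    H.Connected ↔ ∀ v, v ≠ c → H.Adj c v := by
  constructor
  · intro hconn v hv
    have : Nontrivial W := ⟨⟨v, c, hv⟩⟩
    obtain ⟨u, hvu⟩ := hconn.preconnected.exists_adj_of_nontrivial v
    obtain rfl := (hstar v u hvu).resolve_left hv
    exact hvu.symm
  · intro hadj
    refine H.connected_iff_exists_forall_reachable.2 ⟨c, fun v => ?_⟩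
    by_cases hv : v = c
    · rw [hv]
    · exact (hadj v hv).reachable

end SimpleGraph

section Net7

variable {V : Type} [Fintype V] [DecidableEq V] {G : SimpleGraph V} [DecidableRel G.Adj] {r : ℕ}
  {SA : V7 G → Finset V}

theorem net7_rg_adj_imp_center {u v : V7 G} (h : ((net7 G r).RG SA).Adj u v) :
    u = Sum.inl () ∨ v = Sum.inl () :=
  h.1.2

theorem net7_rg_adj_center_iff (e : {e : Sym2 V // e ∈ G.edgeFinset}) :
    ((net7 G r).RG SA).Adj (Sum.inl ()) (Sum.inr e) ↔
      (SA (Sum.inl ()) ∩ SA (Sum.inr e)).Nonempty := by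
  simp [CRN.RG, net7]

theorem net7_rg_connected_iff :
    ((net7 G r).RG SA).Connected ↔
      ∀ e : {e : Sym2 V // e ∈ G.edgeFinset}, (SA (Sum.inl ()) ∩ SA (Sum.inr e)).Nonempty := by
  rw [SimpleGraph.connected_iff_forall_adj_of_star fun _ _ => net7_rg_adj_imp_center]
  constructor
  · exact fun h e => net7_rg_adj_center_iff e |>.1 (h _ Sum.inr_ne_inl)
  · rintro h (_ | e) hv
    · exact absurd rfl hv
    · exact net7_rg_adj_center_iff e |>.2 (h e)

theorem net7_mem_specMap_inr {e : {e : Sym2 V // e ∈ G.edgeFinset}} {x : V} :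
    x ∈ (net7 G r).SpecMap (Sum.inr e) ↔ x ∈ e.1 := by
  simp [net7]

end Net7

theorem stmt_7_general {V : Type} [Fintype V] [DecidableEq V]
    (G : SimpleGraph V) [DecidableRel G.Adj] (r : ℕ) :
    (∃ S : Finset V, S.card ≤ r ∧ ∀ e ∈ G.edgeSet, ∃ v ∈ S, v ∈ e) ↔
      (net7 G r).Connectable := by
  constructor
  · rintro ⟨S, hcard, hcover⟩
    choose f hfS hfe using fun e : {e : Sym2 V // e ∈ G.edgeFinset} =>
      hcover e.1 (SimpleGraph.mem_edgeFinset.1 e.2)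
    refine ⟨Sum.elim (fun _ => S) (fun e => {f e}), ?_,
      net7_rg_connected_iff.2 fun e => ⟨f e, by simp [hfS]⟩⟩
    rintro (_ | e)
    · exact ⟨S.subset_univ, hcard⟩
    · refine ⟨?_, by simp [net7]⟩
      simpa [Finset.singleton_subset_iff, net7_mem_specMap_inr] using hfe e
  · rintro ⟨SA, hvalid, hconn⟩
    refine ⟨SA (Sum.inl ()), (hvalid _).2, fun e he => ?_⟩
    obtain ⟨x, hx⟩ := net7_rg_connected_iff.1 hconn ⟨e, SimpleGraph.mem_edgeFinset.2 he⟩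
    rw [Finset.mem_inter] at hx
    exact ⟨x, hx.1, net7_mem_specMap_inr.1 ((hvalid _).1 hx.2)⟩

/-- G has a vertex cover of size at most r iff the star network of the reduction
is connectable. -/
theorem stmt_7 {V : Type} [Fintype V] [DecidableEq V]
    (G : SimpleGraph V) [DecidableRel G.Adj] (r : ℕ) (hr : 0 < r) :
    (∃ S : Finset V, S.card ≤ r ∧ ∀ e ∈ G.edgeSet, ∃ v ∈ S, v ∈ e) ↔
      (net7 G r).Connectable :=
  stmt_7_general G r
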